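/- arXiv:1304.6838 — 8 statements merged into one kernel-verified Lean document; each statement's English description precedes it below -/
import Mathlib

section
/- If A and B are sets of nonnegative integers such that every sufficiently large integer n has at least one representation n = a + b with a ∈ A, b ∈ B, and liminf_{x→∞} (A(x)B(x) − x) < ∞ (where A(x), B(x) are counting functions), then there exists n₁ such that for all n ≥ n₁ the number of representations of n as a + b with a ∈ A, b ∈ B is exactly 1. -/
/-- counting function: number of elements of `S` that are `≤ x` -/
noncomputable def cnt (S : Set ℕ) (x : ℕ) : ℕ := (S ∩ Set.Iic x).ncard

/-- number of representations of `n` as `a + b`, `a ∈ A`, `b ∈ B` -/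
noncomputable def rep (A B : Set ℕ) (n : ℕ) : ℕ :=
  {p : ℕ × ℕ | p.1 ∈ A ∧ p.2 ∈ B ∧ p.1 + p.2 = n}.ncard

open Classical in
lemma rep_eq (A B : Set ℕ) (n : ℕ) :
    rep A B n = ((Finset.Iic n ×ˢ Finset.Iic n).filter
      (fun p => p.1 ∈ A ∧ p.2 ∈ B ∧ p.1 + p.2 = n)).card := by
  rw [rep, ← Set.ncard_coe_finset]
  congr 1
  ext p
  simp only [Finset.coe_filter, Set.mem_setOf_eq, Finset.mem_product, Finset.mem_Iic]
  constructor
  · rintro ⟨ha, hb, hn⟩; exact ⟨⟨by omega, by omega⟩, ha, hb, hn⟩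
  · rintro ⟨_, h⟩; exact h

open Classical in
lemma cnt_eq (S : Set ℕ) (x : ℕ) :
    cnt S x = ((Finset.Iic x).filter (· ∈ S)).card := by
  rw [cnt, ← Set.ncard_coe_finset]
  congr 1
  ext a
  simp only [Finset.coe_filter, Set.mem_setOf_eq, Finset.mem_Iic, Set.mem_inter_iff,
    Set.mem_Iic]
  tauto

open Classical in
lemma sum_rep_le (A B : Set ℕ) (x : ℕ) :
    ∑ n ∈ Finset.Iic x, rep A B n ≤ cnt A x * cnt B x := by
  have h1 : ∀ n ∈ Finset.Iic x, rep A B n =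
      (((Finset.Iic x).filter (· ∈ A) ×ˢ (Finset.Iic x).filter (· ∈ B)).filter
        (fun p => p.1 + p.2 = n)).card := by
    intro n hn
    rw [rep_eq]
    congr 1
    ext p
    simp only [Finset.mem_filter, Finset.mem_product, Finset.mem_Iic] at *
    constructor
    · rintro ⟨⟨h1, h2⟩, ha, hb, hs⟩
      exact ⟨⟨⟨by omega, ha⟩, by omega, hb⟩, hs⟩
    · rintro ⟨⟨⟨h1, ha⟩, h2, hb⟩, hs⟩
      exact ⟨⟨by omega, by omega⟩, ha, hb, hs⟩
  rw [Finset.sum_congr rfl h1, cnt_eq, cnt_eq, ← Finset.card_product]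
  have hdisj : ∀ m ∈ Finset.Iic x, ∀ n ∈ Finset.Iic x, m ≠ n →
      Disjoint (((Finset.Iic x).filter (· ∈ A) ×ˢ (Finset.Iic x).filter (· ∈ B)).filter
        (fun p => p.1 + p.2 = m))
        (((Finset.Iic x).filter (· ∈ A) ×ˢ (Finset.Iic x).filter (· ∈ B)).filter
        (fun p => p.1 + p.2 = n)) := by
    intro m hm n hn hmn
    simp only [Finset.disjoint_left, Finset.mem_filter]
    rintro p ⟨_, h1⟩ ⟨_, h2⟩
    exact hmn (h1 ▸ h2 ▸ rfl)
  rw [← Finset.card_biUnion hdisj]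
  refine Finset.card_le_card ?_
  intro p hp
  simp only [Finset.mem_biUnion] at hp
  obtain ⟨n, _, hp⟩ := hp
  exact Finset.mem_of_mem_filter _ hp

theorem stmt0 (A B : Set ℕ)
    (hcompl : ∃ n₀ : ℕ, ∀ n ≥ n₀, 1 ≤ rep A B n)
    (hliminf : ∃ C : ℤ, ∀ N : ℕ, ∃ x ≥ N,
      (cnt A x : ℤ) * (cnt B x : ℤ) - (x : ℤ) ≤ C) :
    ∃ n₁ : ℕ, ∀ n ≥ n₁, rep A B n = 1 := by
  obtain ⟨n₀, h₀⟩ := hcompl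
  obtain ⟨C, hC⟩ := hliminf
  set K : ℕ := (C + n₀).toNat with hK
  -- the bounded-sum lemma: for x ≥ n₀ with the liminf bound,
  -- ∑_{n ∈ Icc n₀ x} (rep n - 1) ≤ K
  have hS : ∀ x : ℕ, n₀ ≤ x → (cnt A x : ℤ) * (cnt B x : ℤ) - (x : ℤ) ≤ C →
      ∑ n ∈ Finset.Icc n₀ x, (rep A B n - 1) ≤ K := by
    intro x hx hbd
    have h2 : ∑ n ∈ Finset.Icc n₀ x, rep A B n ≤ ∑ n ∈ Finset.Iic x, rep A B n :=
      Finset.sum_le_sum_of_subset (by intro n hn; simp at *; omega)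
    have h3 := sum_rep_le A B x
    have h4 : ∑ n ∈ Finset.Icc n₀ x, rep A B n =
        (∑ n ∈ Finset.Icc n₀ x, (rep A B n - 1)) + (x + 1 - n₀) := by
      have : ∀ n ∈ Finset.Icc n₀ x, rep A B n = (rep A B n - 1) + 1 := by
        intro n hn
        have := h₀ n (by simp at hn; omega)
        omega
      rw [Finset.sum_congr rfl this, Finset.sum_add_distrib, Finset.sum_const,
        Nat.card_Icc, smul_eq_mul, mul_one]
    have h5 : ((∑ n ∈ Finset.Icc n₀ x, (rep A B n - 1) : ℕ) : ℤ) ≤ C + n₀ := by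
      have hb : ((cnt A x * cnt B x : ℕ) : ℤ) ≤ (x : ℤ) + C := by push_cast; linarith
      have h6 : ((∑ n ∈ Finset.Icc n₀ x, rep A B n : ℕ) : ℤ) ≤ (x : ℤ) + C :=
        le_trans (Nat.cast_le.mpr (h2.trans h3)) hb
      rw [h4, Nat.cast_add, Nat.cast_sub (by omega : n₀ ≤ x + 1)] at h6
      push_cast at h6 ⊢
      linarith
    omega
  -- exceptional set is finite
  set E : Set ℕ := {n | n₀ ≤ n ∧ 2 ≤ rep A B n} with hE
  have hEfin : E.Finite := by
    by_contra hinf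
    obtain ⟨F, hFsub, hFcard⟩ := Set.Infinite.exists_subset_card_eq hinf (K + 1)
    have hFne : F.Nonempty := Finset.card_pos.mp (by omega)
    obtain ⟨x, hx, hxbd⟩ := hC (max n₀ (F.max' hFne))
    have hxn₀ : n₀ ≤ x := le_trans (le_max_left _ _) hx
    have hFsub' : F ⊆ Finset.Icc n₀ x := by
      intro n hn
      have h1 := (hFsub hn).1
      have h2 : n ≤ F.max' hFne := Finset.le_max' F n hn
      simp only [Finset.mem_Icc]
      constructor
      · exact h1
      · exact le_trans h2 (le_trans (le_max_right _ _) hx)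
    have := hS x hxn₀ hxbd
    have hge : K + 1 ≤ ∑ n ∈ Finset.Icc n₀ x, (rep A B n - 1) := by
      calc K + 1 = ∑ _n ∈ F, 1 := by rw [Finset.sum_const, smul_eq_mul, mul_one, hFcard]
        _ ≤ ∑ n ∈ F, (rep A B n - 1) := Finset.sum_le_sum (fun n hn => by
            have := (hFsub hn).2; omega)
        _ ≤ _ := Finset.sum_le_sum_of_subset hFsub'
    omega
  obtain ⟨m, hm⟩ := hEfin.bddAbove
  refine ⟨max n₀ (m + 1), fun n hn => ?_⟩
  have h1 : 1 ≤ rep A B n := h₀ n (le_trans (le_max_left _ _) hn)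
  by_contra hne
  have h2 : 2 ≤ rep A B n := by omega
  have : n ∈ E := ⟨le_trans (le_max_left _ _) hn, h2⟩
  have := hm this
  have := le_trans (le_max_right n₀ (m+1)) hn
  omega
end

section
/- Let A be a finite set of nonnegative integers and B ⊆ ℕ such that every sufficiently large n is uniquely representable as a + b with a ∈ A, b ∈ B (exactly one representation for n ≥ n₁). Then the set B is eventually periodic: there exist a positive integer M and N₀ such that for all n ≥ N₀, n ∈ B if and only if n + M ∈ B. -/
theorem stmt1 (A B : Set ℕ) (hA : A.Finite) (n₁ : ℕ)
    (hrep : ∀ n ≥ n₁, rep A B n = 1) :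
    ∃ M : ℕ, 0 < M ∧ ∃ N₀ : ℕ, ∀ n ≥ N₀, (n ∈ B ↔ n + M ∈ B) := by
  classical
  -- existence of a representation
  have hex : ∀ m ≥ n₁, ∃ a ∈ A, ∃ b ∈ B, a + b = m := by
    intro m hm
    have h1 := hrep m hm
    unfold rep at h1
    rw [Set.ncard_eq_one] at h1
    obtain ⟨p, hp⟩ := h1
    have hpmem : p ∈ {p : ℕ × ℕ | p.1 ∈ A ∧ p.2 ∈ B ∧ p.1 + p.2 = m} := by
      rw [hp]; exact rfl
    exact ⟨p.1, hpmem.1, p.2, hpmem.2.1, hpmem.2.2⟩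
  -- uniqueness of representations
  have huniq : ∀ m ≥ n₁, ∀ a b a' b', a ∈ A → b ∈ B → a' ∈ A → b' ∈ B →
      a + b = m → a' + b' = m → a = a' ∧ b = b' := by
    intro m hm a b a' b' ha hb ha' hb' h1 h2
    have hh := hrep m hm
    unfold rep at hh
    rw [Set.ncard_eq_one] at hh
    obtain ⟨p, hp⟩ := hh
    have e1 : (a, b) ∈ {p : ℕ × ℕ | p.1 ∈ A ∧ p.2 ∈ B ∧ p.1 + p.2 = m} := ⟨ha, hb, h1⟩
    have e2 : (a', b') ∈ {p : ℕ × ℕ | p.1 ∈ A ∧ p.2 ∈ B ∧ p.1 + p.2 = m} := ⟨ha', hb', h2⟩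
    rw [hp] at e1 e2
    have := e1.trans e2.symm
    exact ⟨congrArg Prod.fst this, congrArg Prod.snd this⟩
  -- A is nonempty
  obtain ⟨a0, ha0, -⟩ := hex n₁ le_rfl
  have hAne : hA.toFinset.Nonempty := ⟨a0, hA.mem_toFinset.2 ha0⟩
  set amin := hA.toFinset.min' hAne with hamin
  set amax := hA.toFinset.max' hAne with hamax
  have haminA : amin ∈ A := hA.mem_toFinset.1 (hA.toFinset.min'_mem hAne)
  set L := amax - amin with hL
  have hminmax : amin ≤ amax :=
    hA.toFinset.min'_le amax (hA.toFinset.max'_mem hAne)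
  -- determination lemma
  have hdet : ∀ p, n₁ ≤ p →
      (p ∈ B ↔ ¬ ∃ a ∈ A, ∃ b ∈ B, a + b = p + amin ∧ a ≠ amin) := by
    intro p hp
    have hm : n₁ ≤ p + amin := le_trans hp (Nat.le_add_right _ _)
    constructor
    · rintro hpB ⟨a, ha, b, hb, hab, hne⟩
      exact hne (huniq (p + amin) hm a b amin p ha hb haminA hpB hab (by omega)).1
    · intro h
      obtain ⟨a, ha, b, hb, hab⟩ := hex (p + amin) hm
      by_cases hae : a = amin
      · have : b = p := by omega
        exact this ▸ hb
      · exact absurd ⟨a, ha, b, hb, hab, hae⟩ h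
  -- window function
  set g : ℕ → Fin (L + 1) → Bool := fun n i => decide (n + (i : ℕ) ∈ B) with hg
  have hgiff : ∀ n n', g n = g n' → ∀ j, j ≤ L → (n + j ∈ B ↔ n' + j ∈ B) := by
    intro n n' h j hj
    have := congrFun h ⟨j, by omega⟩
    simpa [hg] using this
  -- one-sided transfer of the "bad" existence
  have key : ∀ x y : ℕ, (∀ j, j ≤ L → (x + j ∈ B ↔ y + j ∈ B)) →
      (∃ a ∈ A, ∃ b ∈ B, a + b = (x + 1 + L) + amin ∧ a ≠ amin) →
      (∃ a ∈ A, ∃ b ∈ B, a + b = (y + 1 + L) + amin ∧ a ≠ amin) := by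
    rintro x y hxy ⟨a, ha, b, hb, hab, hne⟩
    have haA : a ∈ hA.toFinset := hA.mem_toFinset.2 ha
    have h1 : amin ≤ a := hA.toFinset.min'_le a haA
    have h2 : a ≤ amax := hA.toFinset.le_max' a haA
    have h3 : amin < a := lt_of_le_of_ne h1 (Ne.symm hne)
    have hb1 : b = x + (b - x) := by omega
    have hb2 : b - x ≤ L := by omega
    refine ⟨a, ha, y + (b - x), (hxy (b - x) hb2).1 (hb1 ▸ hb), by omega, hne⟩
  -- deterministic step
  have hstep : ∀ n n', n₁ ≤ n → n₁ ≤ n' → g n = g n' → g (n + 1) = g (n' + 1) := by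
    intro n n' hn hn' h
    funext i
    have hiff : (n + 1 + (i : ℕ) ∈ B ↔ n' + 1 + (i : ℕ) ∈ B) := by
      by_cases hi : (i : ℕ) < L
      · have := hgiff n n' h ((i : ℕ) + 1) (by omega)
        constructor
        · intro hmem
          exact (by omega : n' + ((i:ℕ)+1) = n' + 1 + (i:ℕ)) ▸
            (this.1 ((by omega : n + 1 + (i:ℕ) = n + ((i:ℕ)+1)) ▸ hmem))
        · intro hmem
          exact (by omega : n + ((i:ℕ)+1) = n + 1 + (i:ℕ)) ▸
            (this.2 ((by omega : n' + 1 + (i:ℕ) = n' + ((i:ℕ)+1)) ▸ hmem))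
      · have hiL : (i : ℕ) = L := by omega
        rw [hiL]
        rw [hdet (n + 1 + L) (by omega), hdet (n' + 1 + L) (by omega)]
        constructor
        · intro hc hc2
          exact hc (key n' n (fun j hj => (hgiff n n' h j hj).symm) hc2)
        · intro hc hc2
          exact hc (key n n' (hgiff n n' h) hc2)
    simp only [hg]
    exact decide_eq_decide.mpr hiff
  -- pigeonhole
  obtain ⟨k, k', hkk, heq⟩ :=
    Finite.exists_ne_map_eq_of_infinite (fun k : ℕ => g (n₁ + k))
  rcases hkk.lt_or_gt with hlt | hlt
  all_goals {
    first
      | (refine ⟨k' - k, by omega, n₁ + k, ?_⟩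
         have hiter : ∀ j, g (n₁ + k + j) = g (n₁ + k' + j) := by
           intro j
           induction j with
           | zero => simpa using heq
           | succ j ih =>
             have := hstep (n₁ + k + j) (n₁ + k' + j) (by omega) (by omega) ih
             simpa [Nat.add_assoc] using this
         intro n hn
         have h0 := hgiff _ _ (hiter (n - (n₁ + k))) 0 (by omega)
         have e1 : n₁ + k + (n - (n₁ + k)) + 0 = n := by omega
         have e2 : n₁ + k' + (n - (n₁ + k)) + 0 = n + (k' - k) := by omega
         rw [e1, e2] at h0
         exact h0)
      | (refine ⟨k - k', by omega, n₁ + k', ?_⟩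
         have hiter : ∀ j, g (n₁ + k' + j) = g (n₁ + k + j) := by
           intro j
           induction j with
           | zero => simpa using heq.symm
           | succ j ih =>
             have := hstep (n₁ + k' + j) (n₁ + k + j) (by omega) (by omega) ih
             simpa [Nat.add_assoc] using this
         intro n hn
         have h0 := hgiff _ _ (hiter (n - (n₁ + k'))) 0 (by omega)
         have e1 : n₁ + k' + (n - (n₁ + k')) + 0 = n := by omega
         have e2 : n₁ + k + (n - (n₁ + k')) + 0 = n + (k - k') := by omega
         rw [e1, e2] at h0
         exact h0)
  }
end

section
/- Let A be a finite set of nonnegative integers whose characteristic polynomial f_A(z) = Σ_{a∈A} z^a is divisible by the cyclotomic polynomial Φ_{p^{s+1}} for a prime p with |A| = p. Then there exist integers a ≥ 0 and k₀, ..., k_{p−1} such that A = {a + i·p^s + k_i·p^{s+1} : i = 0, ..., p−1}. -/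
open Polynomial Finset

private lemma sum_range_mul_aux {M : Type*} [AddCommMonoid M] (a b : ℕ) (f : ℕ → M) :
    ∑ r ∈ range (a * b), f r = ∑ j ∈ range a, ∑ c ∈ range b, f (j * b + c) := by
  induction a with
  | zero => simp
  | succ a ih =>
    rw [sum_range_succ, ← ih, Nat.succ_mul, Finset.sum_range_add]

theorem stmt2 (p : ℕ) (hp : p.Prime) (s : ℕ) (A : Finset ℕ) (hcard : A.card = p)
    (hdvd : cyclotomic (p ^ (s + 1)) ℤ ∣ ∑ a ∈ A, X ^ a) :
    ∃ (a : ℤ), 0 ≤ a ∧ ∃ k : Fin p → ℤ,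
      Finset.image (fun x : ℕ => (x : ℤ)) A =
        Finset.image (fun i : Fin p => a + (i : ℤ) * p ^ s + k i * p ^ (s + 1))
          Finset.univ := by
  classical
  obtain ⟨q, hq⟩ : ∃ q, p = q + 1 := ⟨p - 1, (Nat.succ_pred_eq_of_pos hp.pos).symm⟩
  set N := p ^ (s + 1) with hN
  set m := p ^ s with hm
  have hmN : N = m * p := by rw [hN, hm, pow_succ]
  have hm0 : 0 < m := pow_pos hp.pos s
  have hN0 : 0 < N := pow_pos hp.pos _
  set n : ℕ → ℕ := fun r => (A.filter (fun a => a % N = r)).card with hn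
  set Φ : ℤ[X] := cyclotomic N ℤ with hΦ
  have hmonic : Φ.Monic := cyclotomic.monic N ℤ
  set ω : AdjoinRoot Φ := AdjoinRoot.root Φ with hω
  have hωN : ω ^ N = 1 := by
    have h0 : AdjoinRoot.mk Φ (X ^ N - 1) = 0 :=
      AdjoinRoot.mk_eq_zero.mpr (cyclotomic.dvd_X_pow_sub_one N ℤ)
    have := sub_eq_zero.mp (by simpa [map_sub, map_pow] using h0)
    simpa using this
  have hωmod : ∀ a : ℕ, ω ^ a = ω ^ (a % N) := by
    intro a
    conv_lhs => rw [← Nat.div_add_mod a N]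
    rw [pow_add, pow_mul, hωN, one_pow, one_mul]
  have hgeom : Φ = ∑ i ∈ range p, (X ^ m) ^ i := by
    rw [hΦ, hN, hm]; exact cyclotomic_prime_pow_eq_geom_sum hp
  have hrel : ∑ j ∈ range p, ω ^ (j * m) = 0 := by
    have h0 : AdjoinRoot.mk Φ (∑ i ∈ range p, (X ^ m) ^ i) = 0 := by
      rw [← hgeom]; exact AdjoinRoot.mk_self
    have : ∑ j ∈ range p, ω ^ (m * j) = 0 := by
      simpa [map_sum, map_pow, ← pow_mul] using h0
    simpa [mul_comm] using this
  have hsum0 : ∑ a ∈ A, ω ^ a = 0 := by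
    have h0 : AdjoinRoot.mk Φ (∑ a ∈ A, X ^ a) = 0 := AdjoinRoot.mk_eq_zero.mpr hdvd
    simpa [map_sum, map_pow] using h0
  -- group by residues mod N
  have hmaps : ∀ a ∈ A, a % N ∈ range N := fun a _ => mem_range.mpr (Nat.mod_lt a hN0)
  have key1 : ∑ r ∈ range N, (n r : ℤ) • ω ^ r = 0 := by
    have h1 : ∑ r ∈ range N, ∑ a ∈ A.filter (fun a => a % N = r), ω ^ (a % N) =
        ∑ a ∈ A, ω ^ (a % N) := Finset.sum_fiberwise_of_maps_to hmaps _
    have h2 : ∑ a ∈ A, ω ^ (a % N) = 0 := by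
      rw [← hsum0]; exact Finset.sum_congr rfl fun a _ => (hωmod a).symm
    rw [h2] at h1
    rw [← h1]
    refine Finset.sum_congr rfl fun r _ => ?_
    rw [Finset.sum_congr rfl (fun a ha => by rw [(Finset.mem_filter.mp ha).2] :
      ∀ a ∈ A.filter (fun a => a % N = r), ω ^ (a % N) = ω ^ r), Finset.sum_const]
    simp [hn]
  have key2 : ∑ j ∈ range p, ∑ c ∈ range m, (n (j * m + c) : ℤ) • ω ^ (j * m + c) = 0 := by
    rw [← sum_range_mul_aux p m (fun r => (n r : ℤ) • ω ^ r), ← mul_comm m p, ← hmN]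
    exact key1
  -- substitute the relation for the top block
  have hωlast : ∀ c : ℕ, ω ^ (q * m + c) = - ∑ j ∈ range q, ω ^ (j * m + c) := by
    intro c
    have h := hrel
    rw [hq, Finset.sum_range_succ] at h
    have h2 : ω ^ (q * m) = - ∑ j ∈ range q, ω ^ (j * m) := eq_neg_of_add_eq_zero_right h
    rw [pow_add, h2, neg_mul, Finset.sum_mul]
    congr 1
    exact Finset.sum_congr rfl fun j _ => by rw [← pow_add]
  set z : ℕ → ℤ := fun e => (n e : ℤ) - (n (q * m + e % m) : ℤ) with hz
  have key3 : ∑ e ∈ range (q * m), z e • ω ^ e = 0 := by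
    rw [sum_range_mul_aux q m (fun e => z e • ω ^ e)]
    have hzc : ∀ j, ∀ c ∈ range m, z (j * m + c) = (n (j * m + c) : ℤ) - n (q * m + c) := by
      intro j c hc
      rw [hz]
      simp only
      rw [Nat.mul_add_mod_of_lt (mem_range.mp hc)]
    have hswap : ∑ c ∈ range m, (n (q * m + c) : ℤ) • ω ^ (q * m + c)
        = - ∑ j ∈ range q, ∑ c ∈ range m, (n (q * m + c) : ℤ) • ω ^ (j * m + c) := by
      have h1 : ∀ c ∈ range m, (n (q * m + c) : ℤ) • ω ^ (q * m + c)
          = - ∑ j ∈ range q, (n (q * m + c) : ℤ) • ω ^ (j * m + c) := by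
        intro c _
        rw [hωlast c, smul_neg, Finset.smul_sum]
      rw [Finset.sum_congr rfl h1, Finset.sum_neg_distrib, Finset.sum_comm]
    have h4 := key2
    rw [hq, Finset.sum_range_succ, hswap] at h4
    calc ∑ j ∈ range q, ∑ c ∈ range m, z (j * m + c) • ω ^ (j * m + c)
        = ∑ j ∈ range q, ∑ c ∈ range m,
            ((n (j * m + c) : ℤ) • ω ^ (j * m + c) - (n (q * m + c) : ℤ) • ω ^ (j * m + c)) := by
          refine Finset.sum_congr rfl fun j _ => Finset.sum_congr rfl fun c hc => ?_
          rw [hzc j c hc, sub_smul]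
      _ = (∑ j ∈ range q, ∑ c ∈ range m, (n (j * m + c) : ℤ) • ω ^ (j * m + c))
          + - ∑ j ∈ range q, ∑ c ∈ range m, (n (q * m + c) : ℤ) • ω ^ (j * m + c) := by
          simp only [sub_eq_add_neg, Finset.sum_add_distrib, Finset.sum_neg_distrib]
      _ = 0 := h4
  -- linear independence
  set pb := AdjoinRoot.powerBasis' hmonic with hpb
  have hdim : pb.dim = q * m := by
    rw [hpb, AdjoinRoot.powerBasis'_dim, hΦ, natDegree_cyclotomic, hN,
      Nat.totient_prime_pow hp (Nat.succ_pos s), hm]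
    rw [show p - 1 = q from by omega, Nat.succ_sub_one]
    ring
  have hzero : ∀ e < q * m, z e = 0 := by
    have hli := pb.basis.linearIndependent
    rw [Fintype.linearIndependent_iff] at hli
    have hgen : pb.gen = ω := by rw [hpb, AdjoinRoot.powerBasis'_gen, hω]
    have hsum : ∑ i : Fin pb.dim, z i • pb.basis i = 0 := by
      calc ∑ i : Fin pb.dim, z i • pb.basis i
          = ∑ i : Fin pb.dim, z (i : ℕ) • ω ^ (i : ℕ) := by
            refine Finset.sum_congr rfl fun i _ => ?_
            rw [pb.basis_eq_pow, hgen]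
        _ = ∑ e ∈ range pb.dim, z e • ω ^ e :=
            Fin.sum_univ_eq_sum_range (fun e => z e • ω ^ e) pb.dim
        _ = 0 := by rw [hdim]; exact key3
    intro e he
    exact hli (fun i => z i) hsum ⟨e, hdim ▸ he⟩
  -- constancy of counts along blocks
  have hconst : ∀ j < p, ∀ c < m, n (j * m + c) = n (q * m + c) := by
    intro j hj c hc
    rcases Nat.lt_or_ge j q with hjq | hjq
    · have he : j * m + c < q * m := by
        calc j * m + c < j * m + m := by omega
          _ = (j + 1) * m := by ring
          _ ≤ q * m := Nat.mul_le_mul_right m (by omega)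
      have := hzero _ he
      rw [hz] at this
      simp only at this
      rw [Nat.mul_add_mod_of_lt hc] at this
      omega
    · have : j = q := by omega
      rw [this]
  -- counting
  have hsumn : ∑ r ∈ range N, n r = p := by
    rw [← hcard]
    exact (Finset.card_eq_sum_card_fiberwise hmaps).symm
  have hS : ∑ c ∈ range m, n (q * m + c) = 1 := by
    have h1 : ∑ r ∈ range N, n r = ∑ j ∈ range p, ∑ c ∈ range m, n (j * m + c) := by
      rw [hmN, mul_comm m p]; exact sum_range_mul_aux p m n
    have h2 : ∑ j ∈ range p, ∑ c ∈ range m, n (j * m + c)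
        = p * ∑ c ∈ range m, n (q * m + c) := by
      rw [Finset.sum_congr rfl fun j hj => Finset.sum_congr rfl fun c hc =>
        hconst j (mem_range.mp hj) c (mem_range.mp hc), Finset.sum_const, card_range, smul_eq_mul]
    have := hsumn
    rw [h1, h2] at this
    exact Nat.eq_of_mul_eq_mul_left hp.pos (this.trans (Nat.mul_one p).symm)
  -- extract the unique column c₀
  obtain ⟨c0, hc0mem, hc0ne⟩ : ∃ c ∈ range m, n (q * m + c) ≠ 0 := by
    by_contra h
    push_neg at h
    rw [Finset.sum_eq_zero h] at hS
    exact one_ne_zero hS.symm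
  have hc0m : c0 < m := mem_range.mp hc0mem
  have hrest : ∀ c < m, c ≠ c0 → n (q * m + c) = 0 := by
    intro c hc hne
    have hsplit := Finset.add_sum_erase (range m) (fun c => n (q * m + c)) hc0mem
    rw [hS] at hsplit
    have h1 : 1 ≤ n (q * m + c0) := Nat.one_le_iff_ne_zero.mpr hc0ne
    have h2 : ∑ x ∈ (range m).erase c0, n (q * m + x) = 0 := by omega
    have := (Finset.sum_eq_zero_iff.mp h2) c (Finset.mem_erase.mpr ⟨hne, mem_range.mpr hc⟩)
    exact this
  have hc0one : n (q * m + c0) = 1 := by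
    have hsplit := Finset.add_sum_erase (range m) (fun c => n (q * m + c)) hc0mem
    rw [hS] at hsplit
    have h1 : 1 ≤ n (q * m + c0) := Nat.one_le_iff_ne_zero.mpr hc0ne
    omega
  -- each fiber over j*m + c0 is a singleton
  have hone : ∀ j : Fin p, n ((j : ℕ) * m + c0) = 1 := fun j =>
    (hconst j j.isLt c0 hc0m).trans hc0one
  have hx : ∀ j : Fin p, ∃ x, A.filter (fun a => a % N = (j : ℕ) * m + c0) = {x} :=
    fun j => Finset.card_eq_one.mp (hone j)
  choose x hxx using hx
  have hxA : ∀ j : Fin p, x j ∈ A := by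
    intro j
    have : x j ∈ A.filter (fun a => a % N = (j : ℕ) * m + c0) := by
      rw [hxx j]; exact Finset.mem_singleton_self _
    exact (Finset.mem_filter.mp this).1
  have hxmod : ∀ j : Fin p, x j % N = (j : ℕ) * m + c0 := by
    intro j
    have : x j ∈ A.filter (fun a => a % N = (j : ℕ) * m + c0) := by
      rw [hxx j]; exact Finset.mem_singleton_self _
    exact (Finset.mem_filter.mp this).2
  -- every element of A equals some x j
  have hsurj : ∀ a ∈ A, ∃ j : Fin p, a = x j := by
    intro a ha
    have hlt : a % N < m * p := by rw [← hmN]; exact Nat.mod_lt a hN0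
    have hdivlt : a % N / m < p := Nat.div_lt_of_lt_mul hlt
    set j : ℕ := a % N / m with hj
    set c : ℕ := a % N % m with hcdef
    have hcm : c < m := Nat.mod_lt _ hm0
    have heq : a % N = j * m + c := by
      rw [hj, hcdef, Nat.mul_comm]
      exact (Nat.div_add_mod (a % N) m).symm
    have hcc0 : c = c0 := by
      by_contra hne
      have h0 : n (j * m + c) = 0 := by
        rw [hconst j hdivlt c hcm]; exact hrest c hcm hne
      have : a ∈ A.filter (fun b => b % N = j * m + c) :=
        Finset.mem_filter.mpr ⟨ha, heq⟩
      rw [hn] at h0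
      simp only at h0
      exact absurd (Finset.card_eq_zero.mp h0 ▸ this) (Finset.notMem_empty a)
    refine ⟨⟨j, hdivlt⟩, ?_⟩
    have : a ∈ A.filter (fun b => b % N = j * m + c0) :=
      Finset.mem_filter.mpr ⟨ha, by rw [heq, hcc0]⟩
    have := this
    rw [show (A.filter (fun b => b % N = j * m + c0)) =
        A.filter (fun b => b % N = ((⟨j, hdivlt⟩ : Fin p) : ℕ) * m + c0) from rfl,
      hxx ⟨j, hdivlt⟩] at this
    exact Finset.mem_singleton.mp this
  -- assemble the answer
  have hid : ∀ j : Fin p, c0 + (j : ℕ) * m + (x j / N) * N = x j := by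
    intro j
    have h1 := Nat.div_add_mod (x j) N
    rw [hxmod j] at h1
    calc c0 + (j : ℕ) * m + (x j / N) * N
        = N * (x j / N) + ((j : ℕ) * m + c0) := by ring
      _ = x j := h1
  refine ⟨(c0 : ℤ), Int.natCast_nonneg _, fun j => ((x j / N : ℕ) : ℤ), ?_⟩
  have hval : ∀ j : Fin p,
      (c0 : ℤ) + (j : ℤ) * (p : ℤ) ^ s + ((x j / N : ℕ) : ℤ) * (p : ℤ) ^ (s + 1)
        = ((x j : ℕ) : ℤ) := by
    intro j
    have hid' : (c0 + (j : ℕ) * p ^ s + (x j / N) * p ^ (s + 1) : ℕ) = x j := by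
      rw [← hm, ← hN]; exact hid j
    exact_mod_cast hid'
  ext b
  simp only [Finset.mem_image, Finset.mem_univ, true_and]
  constructor
  · rintro ⟨a, ha, rfl⟩
    obtain ⟨j, rfl⟩ := hsurj a ha
    exact ⟨j, hval j⟩
  · rintro ⟨j, rfl⟩
    exact ⟨x j, hxA j, (hval j).symm⟩
end

section
/- Let p be a prime, s ≥ 0, and let t₁, ..., t_p be integers with 0 ≤ t_i ≤ p^{s+1} − p^s for all i. If Σ_{i=1}^p ω^{t_i} = 0 where ω = exp(2πi/p^{s+1}), then the multiset {t₁, ..., t_p} equals {0, p^s, 2p^s, ..., (p−1)p^s}. -/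
/-!
Put `P = ∑ᵢ X ^ tᵢ ∈ ℚ[X]`. Since `P(ω) = 0`, the cyclotomic polynomial `Φ_{p^{s+1}}`, the minimal
polynomial of `ω`, divides `P`; as `deg P ≤ φ(p^{s+1}) = deg Φ_{p^{s+1}}`, `P` is a constant multiple
of `Φ_{p^{s+1}}`, and the constant is `1` because both take the value `p` at `1`. Hence
`P = Φ_{p^{s+1}} = ∑_{i<p} X ^ (i p^s)`, and the multiset of exponents of a sum of monomials can be
read off from its coefficients.
-/

namespace Polynomial

variable {R : Type*}

theorem coeff_multiset_sum_X_pow [Semiring R] (m : Multiset ℕ) (k : ℕ) :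
    (m.map fun e => (X : R[X]) ^ e).sum.coeff k = m.count k := by
  induction m using Multiset.induction with
  | empty => simp
  | cons a m ih =>
    simp only [Multiset.map_cons, Multiset.sum_cons, coeff_add, ih, coeff_X_pow,
      Multiset.count_cons]
    split_ifs <;> simp [add_comm]

theorem multiset_eq_of_sum_X_pow_eq [Semiring R] [CharZero R] {m m' : Multiset ℕ}
    (h : (m.map fun e => (X : R[X]) ^ e).sum = (m'.map fun e => (X : R[X]) ^ e).sum) :
    m = m' :=
  Multiset.ext.mpr fun k => by
    exact_mod_cast (coeff_multiset_sum_X_pow m k).symm.trans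
      ((congrArg (coeff · k) h).trans (coeff_multiset_sum_X_pow m' k))

theorem eq_of_monic_dvd_of_natDegree_le_of_eval_eq [CommRing R] [IsDomain R] {P Q : R[X]}
    (hQ : Q.Monic) (hdvd : Q ∣ P) (hdeg : P.natDegree ≤ Q.natDegree) {a : R}
    (heval : P.eval a = Q.eval a) (hne : Q.eval a ≠ 0) : P = Q := by
  have hP := eq_leadingCoeff_mul_of_monic_of_dvd_of_natDegree_le hQ hdvd hdeg
  have hlead : P.leadingCoeff = 1 := by
    have := congrArg (eval a) hP
    rw [eval_mul, eval_C, heval] at this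
    exact (mul_eq_right₀ hne).mp this.symm
  rwa [hlead, C_1, one_mul] at hP

theorem eq_cyclotomic_of_aeval_eq_zero {K : Type*} [Field K] [CharZero K] {n : ℕ} (hn : 0 < n)
    {ω : K} (hω : IsPrimitiveRoot ω n) {P : ℚ[X]} (hP : aeval ω P = 0)
    (hdeg : P.natDegree ≤ n.totient) {a : ℚ} (heval : P.eval a = (cyclotomic n ℚ).eval a)
    (hne : (cyclotomic n ℚ).eval a ≠ 0) : P = cyclotomic n ℚ := by
  have hdvd : cyclotomic n ℚ ∣ P := cyclotomic_eq_minpoly_rat hω hn ▸ minpoly.dvd ℚ ω hP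
  exact eq_of_monic_dvd_of_natDegree_le_of_eval_eq (cyclotomic.monic n ℚ) hdvd
    (natDegree_cyclotomic n ℚ ▸ hdeg) heval hne

end Polynomial

theorem Nat.totient_prime_pow_succ_eq_sub {p : ℕ} (hp : p.Prime) (s : ℕ) :
    (p ^ (s + 1)).totient = p ^ (s + 1) - p ^ s := by
  rw [Nat.totient_prime_pow_succ hp, Nat.mul_sub_one, pow_succ]

open Polynomial in
theorem stmt3 (p : ℕ) (hp : p.Prime) (s : ℕ) (t : Fin p → ℕ)
    (ht : ∀ i, t i ≤ p ^ (s + 1) - p ^ s)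
    (hsum : ∑ i : Fin p,
      (Complex.exp (2 * Real.pi * Complex.I / (p ^ (s + 1) : ℕ))) ^ t i = 0) :
    Multiset.map t Finset.univ.val =
      Multiset.map (fun i : Fin p => (i : ℕ) * p ^ s) Finset.univ.val := by
  have := Fact.mk hp
  have hn : 0 < p ^ (s + 1) := pow_pos hp.pos _
  have hΦ : ∑ i : Fin p, (X : ℚ[X]) ^ t i = cyclotomic (p ^ (s + 1)) ℚ := by
    refine eq_cyclotomic_of_aeval_eq_zero (a := 1) hn (Complex.isPrimitiveRoot_exp _ hn.ne')
      ?_ ?_ ?_ ?_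
    · simpa using hsum
    · refine natDegree_sum_le_of_forall_le _ _ fun i _ => ?_
      simpa [Nat.totient_prime_pow_succ_eq_sub hp] using ht i
    · simp [eval_finsetSum, eval_one_cyclotomic_prime_pow]
    · simpa [eval_one_cyclotomic_prime_pow] using hp.ne_zero
  rw [cyclotomic_prime_pow_eq_geom_sum hp, ← Fin.sum_univ_eq_sum_range] at hΦ
  apply multiset_eq_of_sum_X_pow_eq (R := ℚ)
  simpa only [Multiset.map_map, Function.comp_def, Finset.sum_map_val, ← pow_mul, mul_comm] using hΦ
end

section
/- Let p be a prime and let a₁, ..., a_p be nonnegative integers with Σ_{i=1}^p ω^{a_i} = 0, where ω = exp(2πi/p^{s+1}) for some s ≥ 0. Then there exist an integer a and integers n₁, ..., n_p and t₁, ..., t_p with 0 ≤ t_i ≤ p^{s+1} − p^s such that a_i = a + n_i·p^{s+1} + t_i for all i. -/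
open Complex

theorem stmt4 (p : ℕ) (hp : p.Prime) (s : ℕ) (a : Fin p → ℕ)
    (hsum : ∑ i : Fin p,
      (Complex.exp (2 * Real.pi * Complex.I / (p ^ (s + 1) : ℕ))) ^ a i = 0) :
    ∃ (c : ℤ) (nn : Fin p → ℤ) (t : Fin p → ℕ),
      ∀ i, t i ≤ p ^ (s + 1) - p ^ s ∧
        (a i : ℤ) = c + nn i * (p : ℤ) ^ (s + 1) + t i := by
  clear hsum
  set N : ℕ := p ^ (s + 1) with hN
  have hppos : 0 < p := hp.pos
  have hNpos : 0 < N := pow_pos hp.pos _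
  have hpsN : p ^ s ≤ N := Nat.pow_le_pow_right hp.pos (by omega)
  set B : Finset ℤ := Finset.univ.biUnion (fun i : Fin p =>
    (Finset.range (p ^ s - 1)).image (fun k : ℕ => ((a i : ℤ) + k + 1) % N)) with hB
  have hBcard : B.card ≤ p * (p ^ s - 1) := by
    refine le_trans Finset.card_biUnion_le ?_
    calc ∑ i : Fin p, ((Finset.range (p ^ s - 1)).image
          (fun k : ℕ => ((a i : ℤ) + k + 1) % N)).card
        ≤ ∑ _i : Fin p, (p ^ s - 1) := by
          refine Finset.sum_le_sum fun i _ => ?_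
          exact le_trans Finset.card_image_le (by simp)
      _ = p * (p ^ s - 1) := by simp [mul_comm]
  have hlt : p * (p ^ s - 1) < N := by
    have h1 : 0 < p ^ s := pow_pos hp.pos s
    have : p * (p ^ s - 1) < p * p ^ s := by
      exact mul_lt_mul_of_pos_left (Nat.sub_lt h1 one_pos) hp.pos
    calc p * (p ^ s - 1) < p * p ^ s := this
      _ = N := by rw [hN, pow_succ, mul_comm]
  have hexists : ∃ c ∈ Finset.Ico (0 : ℤ) (N : ℤ), c ∉ B := by
    by_contra h
    push_neg at h
    have hsub : Finset.Ico (0 : ℤ) (N : ℤ) ⊆ B := fun c hc => h c hc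
    have hcard := Finset.card_le_card hsub
    rw [Int.card_Ico] at hcard
    simp at hcard
    omega
  obtain ⟨c, hcmem, hcB⟩ := hexists
  rw [Finset.mem_Ico] at hcmem
  obtain ⟨hc0, hcN⟩ := hcmem
  refine ⟨c, fun i => ((a i : ℤ) - c) / N, fun i => (((a i : ℤ) - c) % N).toNat, fun i => ?_⟩
  set d : ℤ := ((a i : ℤ) - c) % N with hd
  have hNne : (N : ℤ) ≠ 0 := by exact_mod_cast hNpos.ne'
  have hd0 : 0 ≤ d := Int.emod_nonneg _ hNne
  have hdN : d < N := Int.emod_lt_of_pos _ (by exact_mod_cast hNpos)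
  have heq : (a i : ℤ) - c = N * (((a i : ℤ) - c) / N) + d := (Int.mul_ediv_add_emod _ _).symm
  constructor
  · -- bound on t i
    by_contra hgt
    push_neg at hgt
    have hdbig : (N : ℤ) - (p : ℤ) ^ s < d := by
      have : (↑(N - p ^ s) : ℤ) < d := by
        rw [hd]
        omega
      push_cast [Nat.cast_sub hpsN] at this ⊢
      · exact_mod_cast this
    -- c is bad for i
    apply hcB
    rw [hB]
    refine Finset.mem_biUnion.mpr ⟨i, Finset.mem_univ i, ?_⟩
    refine Finset.mem_image.mpr ⟨((N : ℤ) - d - 1).toNat, ?_, ?_⟩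
    · rw [Finset.mem_range]
      have hps1 : 1 ≤ p ^ s := pow_pos hp.pos s
      have hcast : ((p : ℤ) ^ s) = ((p ^ s : ℕ) : ℤ) := by push_cast; ring
      omega
    · have hk : ((((N : ℤ) - d - 1).toNat : ℤ)) = (N : ℤ) - d - 1 := by omega
      rw [hk]
      have h2 : (a i : ℤ) + ((N : ℤ) - d - 1) + 1 = c + (N : ℤ) * ((((a i : ℤ) - c) / N) + 1) := by
        have h3 : (N : ℤ) * ((((a i : ℤ) - c) / N) + 1) = (N : ℤ) * (((a i : ℤ) - c) / N) + N := by ring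
        omega
      rw [h2, Int.add_mul_emod_self_left]
      exact Int.emod_eq_of_lt hc0 hcN
  · -- equation
    have ht : ((((a i : ℤ) - c) % N).toNat : ℤ) = d := Int.toNat_of_nonneg hd0
    rw [ht]
    have hNcast : ((p : ℤ)) ^ (s + 1) = (N : ℤ) := by rw [hN]; push_cast; ring
    rw [hNcast]
    beta_reduce
    rw [mul_comm]
    omega
end

section
/- Let n = d₁d₂ with integers d₁, d₂ > 1, and let A = {u + v·d₁d₂ : 0 ≤ u ≤ d₁−1, 0 ≤ v ≤ d₂−1} and B = {k·d₁d₂² + w·d₁ : k ∈ ℕ, 0 ≤ w ≤ d₂−1}. Then A(x)B(x) − x is bounded as x → ∞: A(x) = d₁d₂ for large x and B(x) = x/(d₁d₂) + O(1). -/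
open Finset

def residueBlocks (P K : ℕ) (R : Finset ℕ) : Finset ℕ :=
  (range K ×ˢ R).image fun p => P * p.1 + p.2

def periodicSet (P : ℕ) (R : Finset ℕ) : Set ℕ :=
  {m | ∃ k, ∃ r ∈ R, m = P * k + r}

section

variable {P : ℕ} {R : Finset ℕ}

lemma mem_residueBlocks {K m : ℕ} :
    m ∈ residueBlocks P K R ↔ ∃ k < K, ∃ r ∈ R, m = P * k + r := by
  simp only [residueBlocks, mem_image, mem_product, mem_range, Prod.exists]
  constructor
  · rintro ⟨k, r, ⟨hk, hr⟩, rfl⟩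
    exact ⟨k, hk, r, hr, rfl⟩
  · rintro ⟨k, hk, r, hr, rfl⟩
    exact ⟨k, r, ⟨hk, hr⟩, rfl⟩

lemma card_residueBlocks (hR : ∀ r ∈ R, r < P) (K : ℕ) :
    #(residueBlocks P K R) = K * #R := by
  rw [residueBlocks, card_image_of_injOn, card_product, card_range]
  rintro ⟨k, r⟩ hkr ⟨k', r'⟩ hkr' h
  simp only [coe_product, Set.mem_prod, mem_coe] at hkr hkr' h
  have hrP := hR r hkr.2
  have hr'P := hR r' hkr'.2
  have hP : 0 < P := by omega
  have hk : k = k' := by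
    simpa [Nat.mul_add_div hP, Nat.div_eq_of_lt hrP, Nat.div_eq_of_lt hr'P] using
      congrArg (· / P) h
  subst hk
  simp only [Prod.mk.injEq, true_and]
  omega

lemma lt_mul_of_mem_residueBlocks (hR : ∀ r ∈ R, r < P) {K m : ℕ}
    (hm : m ∈ residueBlocks P K R) : m < K * P := by
  obtain ⟨k, hk, r, hr, rfl⟩ := mem_residueBlocks.1 hm
  exact Nat.mul_add_lt_mul_of_lt_of_lt hk (hR r hr)

lemma residueBlocks_subset_periodicSet_inter_Iic (hR : ∀ r ∈ R, r < P) (x : ℕ) :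
    ↑(residueBlocks P (x / P) R) ⊆ periodicSet P R ∩ Set.Iic x := by
  intro m hm
  have hmx : m < x / P * P := lt_mul_of_mem_residueBlocks hR hm
  obtain ⟨k, -, r, hr, rfl⟩ := mem_residueBlocks.1 hm
  exact ⟨⟨k, r, hr, rfl⟩, (hmx.trans_le (Nat.div_mul_le_self x P)).le⟩

lemma periodicSet_inter_Iic_subset_residueBlocks (hR : ∀ r ∈ R, r < P) (x : ℕ) :
    periodicSet P R ∩ Set.Iic x ⊆ ↑(residueBlocks P (x / P + 1) R) := by
  rintro _ ⟨⟨k, r, hr, rfl⟩, hkr⟩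
  have hP : 0 < P := (Nat.zero_le r).trans_lt (hR r hr)
  have hk : k ≤ x / P :=
    (Nat.le_div_iff_mul_le hP).2 (by rw [Set.mem_Iic] at hkr; nlinarith)
  exact mem_residueBlocks.2 ⟨k, Nat.lt_succ_of_le hk, r, hr, rfl⟩

lemma cnt_periodicSet_mem_Icc (hR : ∀ r ∈ R, r < P) (x : ℕ) :
    cnt (periodicSet P R) x ∈ Set.Icc (x / P * #R) ((x / P + 1) * #R) := by
  rw [← card_residueBlocks hR, ← card_residueBlocks hR, ← Set.ncard_coe_finset,
    ← Set.ncard_coe_finset, cnt]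
  exact ⟨Set.ncard_le_ncard (residueBlocks_subset_periodicSet_inter_Iic hR x)
      ((Set.finite_Iic x).inter_of_right _),
    Set.ncard_le_ncard (periodicSet_inter_Iic_subset_residueBlocks hR x)⟩

end

lemma abs_mul_cnt_periodicSet_sub_le {D : ℕ} {R : Finset ℕ} (hR₀ : R.Nonempty)
    (hR : ∀ r ∈ R, r < D * #R) (x : ℕ) :
    |(D : ℤ) * cnt (periodicSet (D * #R) R) x - x| ≤ D * #R := by
  obtain ⟨r, hr⟩ := hR₀
  have hP : 0 < D * #R := (Nat.zero_le r).trans_lt (hR r hr)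
  obtain ⟨hlo, hhi⟩ := cnt_periodicSet_mem_Icc hR x
  set c := cnt (periodicSet (D * #R) R) x
  set q := x / (D * #R)
  have hqx : q * (D * #R) ≤ x := Nat.div_mul_le_self x _
  have hxq : x < D * #R * (q + 1) := Nat.lt_mul_div_succ x hP
  have hupper : D * c ≤ x + D * #R := by nlinarith [Nat.mul_le_mul_left D hhi]
  have hlower : x ≤ D * c + D * #R := by nlinarith [Nat.mul_le_mul_left D hlo]
  zify at hupper hlower
  exact abs_sub_le_iff.2 ⟨by linarith, by linarith⟩

lemma cnt_eq_ncard_of_subset_Iic {S : Set ℕ} {N x : ℕ} (hS : S ⊆ Set.Iic N) (hx : N ≤ x) :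
    cnt S x = S.ncard := by
  rw [cnt, Set.inter_eq_left.2 (hS.trans (Set.Iic_subset_Iic.2 hx))]

lemma exists_forall_abs_le_of_forall_ge {f : ℕ → ℤ} {N : ℕ} {C : ℤ}
    (h : ∀ x ≥ N, |f x| ≤ C) : ∃ C', ∀ x, |f x| ≤ C' := by
  have hsum : 0 ≤ ∑ y ∈ range N, |f y| := sum_nonneg fun y _ => abs_nonneg (f y)
  refine ⟨C + ∑ y ∈ range N, |f y|, fun x => ?_⟩
  rcases lt_or_ge x N with hx | hx
  · have := single_le_sum (fun y _ => abs_nonneg (f y)) (mem_range.2 hx)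
    linarith [(abs_nonneg (f N)).trans (h N le_rfl)]
  · linarith [h x hx]

lemma cnt_blocks_eq_of_le {d₁ d₂ x : ℕ} (hd₁ : 0 < d₁) (hd₂ : 0 < d₂) (hx : d₂ * (d₁ * d₂) ≤ x) :
    cnt {m | ∃ u v : ℕ, u ≤ d₁ - 1 ∧ v ≤ d₂ - 1 ∧ m = u + v * (d₁ * d₂)} x = d₁ * d₂ := by
  have hblocks : {m | ∃ u v : ℕ, u ≤ d₁ - 1 ∧ v ≤ d₂ - 1 ∧ m = u + v * (d₁ * d₂)} =
      residueBlocks (d₁ * d₂) d₂ (range d₁) := by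
    ext m
    simp only [Set.mem_ofPred_eq, mem_coe, mem_residueBlocks, mem_range]
    constructor
    · rintro ⟨u, v, hu, hv, rfl⟩
      exact ⟨v, by omega, u, by omega, by ring⟩
    · rintro ⟨v, hv, u, hu, rfl⟩
      exact ⟨u, v, by omega, by omega, by ring⟩
  have hR : ∀ u ∈ range d₁, u < d₁ * d₂ := fun u hu =>
    (mem_range.1 hu).trans_le (Nat.le_mul_of_pos_right d₁ hd₂)
  have hbelow : ↑(residueBlocks (d₁ * d₂) d₂ (range d₁)) ⊆ Set.Iic (d₂ * (d₁ * d₂)) :=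
    fun m hm => (lt_mul_of_mem_residueBlocks hR hm).le
  rw [hblocks, cnt_eq_ncard_of_subset_Iic hbelow hx, Set.ncard_coe_finset,
    card_residueBlocks hR, card_range, mul_comm]

lemma abs_mul_cnt_progressions_sub_le {d₁ d₂ : ℕ} (hd₁ : 0 < d₁) (hd₂ : 0 < d₂) (x : ℕ) :
    |(d₁ * d₂ : ℤ) * cnt {m | ∃ k w : ℕ, w ≤ d₂ - 1 ∧ m = k * (d₁ * d₂ ^ 2) + w * d₁} x - x|
      ≤ d₁ * d₂ * d₂ := by
  set R := (range d₂).image (· * d₁)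
  have hcard : #R = d₂ := by
    rw [card_image_of_injective _ (mul_left_injective₀ hd₁.ne'), card_range]
  have hR : ∀ r ∈ R, r < d₁ * d₂ * #R := by
    simp only [R, hcard, mem_image, mem_range]
    rintro _ ⟨w, hw, rfl⟩
    calc w * d₁ < d₂ * d₁ := Nat.mul_lt_mul_of_pos_right hw hd₁
      _ ≤ d₁ * d₂ * d₂ := by rw [mul_comm d₂]; exact Nat.le_mul_of_pos_right _ hd₂
  have hprogressions : {m | ∃ k w : ℕ, w ≤ d₂ - 1 ∧ m = k * (d₁ * d₂ ^ 2) + w * d₁} =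
      periodicSet (d₁ * d₂ * #R) R := by
    ext m
    simp only [periodicSet, Set.mem_ofPred_eq, R, hcard, mem_image, mem_range]
    constructor
    · rintro ⟨k, w, hw, rfl⟩
      exact ⟨k, _, ⟨w, by omega, rfl⟩, by ring⟩
    · rintro ⟨k, _, ⟨w, hw, rfl⟩, rfl⟩
      exact ⟨k, w, by omega, by ring⟩
  have hR₀ : R.Nonempty := (nonempty_range_iff.2 hd₂.ne').image _
  have := abs_mul_cnt_periodicSet_sub_le hR₀ hR x
  rw [← hprogressions, hcard] at this
  exact_mod_cast this

theorem stmt9 (d₁ d₂ : ℕ) (h₁ : 1 < d₁) (h₂ : 1 < d₂)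
    (A : Set ℕ) (hA : A = {m | ∃ u v : ℕ, u ≤ d₁ - 1 ∧ v ≤ d₂ - 1 ∧ m = u + v * (d₁ * d₂)})
    (B : Set ℕ) (hB : B = {m | ∃ k w : ℕ, w ≤ d₂ - 1 ∧ m = k * (d₁ * d₂ ^ 2) + w * d₁}) :
    (∃ N : ℕ, ∀ x ≥ N, cnt A x = d₁ * d₂) ∧
    (∃ C : ℤ, ∀ x : ℕ, |(d₁ * d₂ : ℤ) * (cnt B x : ℤ) - (x : ℤ)| ≤ C * (d₁ * d₂ : ℤ)) ∧
    (∃ C : ℤ, ∀ x : ℕ, |(cnt A x : ℤ) * (cnt B x : ℤ) - (x : ℤ)| ≤ C) := by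
  subst hA hB
  have hd₁ : 0 < d₁ := by omega
  have hd₂ : 0 < d₂ := by omega
  have hcntA := fun x => cnt_blocks_eq_of_le hd₁ hd₂ (x := x)
  have hcntB := abs_mul_cnt_progressions_sub_le hd₁ hd₂
  refine ⟨⟨_, hcntA⟩, ⟨d₂, fun x => by linarith [hcntB x]⟩, ?_⟩
  refine exists_forall_abs_le_of_forall_ge (N := d₂ * (d₁ * d₂)) (C := d₁ * d₂ * d₂)
    fun x hx => ?_
  rw [hcntA x hx]
  exact_mod_cast hcntB x
end

section
/- Let n = d₁d₂ with integers d₁, d₂ > 1 and let A = {u + v·d₁d₂ : 0 ≤ u ≤ d₁−1, 0 ≤ v ≤ d₂−1}. Then |A| = n and A is not of the form {a + i·n^s + k_i·n^{s+1} : i = 0, ..., n−1} for any integers a ≥ 0, s ≥ 0, k_i. -/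
/-!
Every element `a + i n^s + k_i n^(s+1)` of such a set is `≡ a (mod n^s)`, and two of them that
agree mod `n^(s+1)` have the same index `i` (as `0 ≤ i < n`), hence coincide. The set `A` contains
the consecutive integers `0` and `1`, forcing `n^s ∣ 1`, i.e. `s = 0`; but it also contains the
distinct elements `0` and `n`, which agree mod `n = n^(s+1)`.
-/

open Finset

lemma Nat.injOn_add_mul {N : ℕ} : Set.InjOn (fun p : ℕ × ℕ => p.1 + p.2 * N) {p | p.1 < N} := by
  rintro ⟨u, v⟩ (hu : u < N) ⟨u', v'⟩ (hu' : u' < N) h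
  simp only at h
  have hN : 0 < N := by omega
  have hu_eq : u = u' := by
    simpa [Nat.add_mul_mod_self_right, Nat.mod_eq_of_lt hu, Nat.mod_eq_of_lt hu'] using
      congrArg (· % N) h
  have hv_eq : v = v' := by
    simpa [Nat.add_mul_div_right _ _ hN, Nat.div_eq_of_lt hu, Nat.div_eq_of_lt hu'] using
      congrArg (· / N) h
  rw [hu_eq, hv_eq]

def grid (d₁ d₂ N : ℕ) : Finset ℕ := (range d₁ ×ˢ range d₂).image fun p => p.1 + p.2 * N

section Grid

variable {d₁ d₂ N u v : ℕ}

lemma add_mul_mem_grid (hu : u < d₁) (hv : v < d₂) : u + v * N ∈ grid d₁ d₂ N :=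
  mem_image.2 ⟨(u, v), mem_product.2 ⟨mem_range.2 hu, mem_range.2 hv⟩, rfl⟩

lemma coe_grid (h₁ : 0 < d₁) (h₂ : 0 < d₂) :
    (grid d₁ d₂ N : Set ℕ) = {m | ∃ u v : ℕ, u ≤ d₁ - 1 ∧ v ≤ d₂ - 1 ∧ m = u + v * N} := by
  ext m
  simp only [grid, coe_image, coe_product, coe_range, Set.mem_image, Set.mem_prod, Set.mem_Iio,
    Prod.exists, Set.mem_ofPred_eq]
  constructor
  · rintro ⟨u, v, ⟨hu, hv⟩, rfl⟩; exact ⟨u, v, by omega, by omega, rfl⟩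
  · rintro ⟨u, v, hu, hv, rfl⟩; exact ⟨u, v, ⟨by omega, by omega⟩, rfl⟩

lemma card_grid (h : d₁ ≤ N) : (grid d₁ d₂ N).card = d₁ * d₂ := by
  rw [grid, card_image_of_injOn, card_product, card_range, card_range]
  exact Nat.injOn_add_mul.mono fun p hp => (mem_range.1 (mem_product.1 hp).1).trans_le h

end Grid

section DigitSet

def digitSet (N : ℕ) (a : ℤ) (s : ℕ) (k : Fin N → ℤ) : Finset ℤ :=
  univ.image fun i : Fin N => a + (i : ℤ) * N ^ s + k i * N ^ (s + 1)

variable {N : ℕ} {a : ℤ} {s : ℕ} {k : Fin N → ℤ} {x y : ℤ}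

lemma pow_dvd_sub_of_mem_digitSet (hx : x ∈ digitSet N a s k) (hy : y ∈ digitSet N a s k) :
    (N : ℤ) ^ s ∣ x - y := by
  obtain ⟨i, -, rfl⟩ := mem_image.1 hx
  obtain ⟨j, -, rfl⟩ := mem_image.1 hy
  exact ⟨(i - j : ℤ) + (k i - k j) * N, by ring⟩

lemma eq_of_mem_digitSet_of_pow_succ_dvd_sub (hx : x ∈ digitSet N a s k)
    (hy : y ∈ digitSet N a s k) (hxy : (N : ℤ) ^ (s + 1) ∣ x - y) : x = y := by
  obtain ⟨i, -, rfl⟩ := mem_image.1 hx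
  obtain ⟨j, -, rfl⟩ := mem_image.1 hy
  have hN : (N : ℤ) ≠ 0 := by have := i.pos; positivity
  have hdiff : ((i - j : ℤ) * N ^ s) = (a + i * N ^ s + k i * N ^ (s + 1)) -
      (a + j * N ^ s + k j * N ^ (s + 1)) - (k i - k j) * N ^ (s + 1) := by ring
  have hdvd : (N : ℤ) ^ s * N ∣ (N : ℤ) ^ s * (i - j) := by
    rw [← pow_succ, mul_comm, hdiff]
    exact dvd_sub hxy (dvd_mul_left _ _)
  have hij : (i : ℤ) - j = 0 :=
    Int.eq_zero_of_abs_lt_dvd ((mul_dvd_mul_iff_left (pow_ne_zero s hN)).1 hdvd)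
      (by rw [abs_lt]; omega)
  rw [Fin.ext (by omega : (i : ℕ) = j)]

end DigitSet

theorem stmt10 (d₁ d₂ : ℕ) (h₁ : 1 < d₁) (h₂ : 1 < d₂) (n : ℕ) (hn : n = d₁ * d₂)
    (A : Finset ℕ)
    (hA : (A : Set ℕ) = {m | ∃ u v : ℕ, u ≤ d₁ - 1 ∧ v ≤ d₂ - 1 ∧ m = u + v * (d₁ * d₂)}) :
    A.card = n ∧
    ¬ ∃ (a : ℤ), 0 ≤ a ∧ ∃ (s : ℕ) (k : Fin n → ℤ),
      Finset.image (fun x : ℕ => (x : ℤ)) A =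
        Finset.image (fun i : Fin n => a + (i : ℤ) * n ^ s + k i * n ^ (s + 1))
          Finset.univ := by
  subst hn
  have hd₁ : d₁ < d₁ * d₂ := lt_mul_right (by omega) h₂
  have hA_grid : A = grid d₁ d₂ (d₁ * d₂) :=
    coe_injective (hA.trans (coe_grid (by omega) (by omega)).symm)
  refine ⟨hA_grid ▸ card_grid hd₁.le, ?_⟩
  rintro ⟨a, -, s, k, heq : image (fun x : ℕ => (x : ℤ)) A = digitSet _ a s k⟩
  have mem : ∀ u < d₁, ∀ v < d₂,
      ((u + v * (d₁ * d₂) : ℕ) : ℤ) ∈ digitSet (d₁ * d₂) a s k := fun u hu v hv =>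
    heq ▸ mem_image_of_mem _ (hA_grid ▸ add_mul_mem_grid hu hv)
  have hs : s = 0 := by
    have h : (d₁ * d₂) ^ s ∣ 1 := Int.natCast_dvd_natCast.1 (by
      simpa using pow_dvd_sub_of_mem_digitSet (mem 1 h₁ 0 (by omega))
        (mem 0 (by omega) 0 (by omega)))
    rw [Nat.dvd_one, Nat.pow_eq_one] at h
    omega
  subst hs
  have h := eq_of_mem_digitSet_of_pow_succ_dvd_sub (mem 0 (by omega) 1 h₂)
    (mem 0 (by omega) 0 (by omega)) (by simp)
  push_cast at h
  omega
end

section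
/- Let A be a finite set of nonnegative integers with |A| = p prime, let T be a polynomial with integer coefficients and M a positive integer such that f_A(1)·T(1) = M, where f_A(z) = Σ_{a∈A} z^a, and suppose (1 + z + ... + z^{M−1}) divides f_A(z)·T(z) in ℤ[z]. If p^k ∥ M (i.e., p^k | M and p^{k+1} ∤ M) with k ≥ 1, then there exists an integer s with 0 ≤ s ≤ k−1 such that Φ_{p^{s+1}}(z) divides f_A(z). -/
/-!
Each `Φ_{p^t}` with `1 ≤ t ≤ k` divides `1 + z + ⋯ + z^(M-1)`, hence `f_A · T`. If none of them divided
`f_A`, irreducibility would put all of them into `T`; being pairwise relatively prime, their product would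
divide `T`, and evaluating at `1` (where `Φ_{p^t}(1) = p`) gives `p^k ∣ T(1)`. Since `f_A(1) = |A| = p`,
this yields `p^(k+1) ∣ M`.
-/

open Polynomial

theorem Polynomial.cyclotomic.isRelPrime_int {n m : ℕ} (h : n ≠ m) :
    IsRelPrime (cyclotomic n ℤ) (cyclotomic m ℤ) := by
  rcases n.eq_zero_or_pos with rfl | hn
  · simpa using isRelPrime_one_left
  rcases m.eq_zero_or_pos with rfl | hm
  · simpa using isRelPrime_one_right
  rw [(cyclotomic.irreducible hn).isRelPrime_iff_not_dvd]
  exact fun hdvd => h <| cyclotomic_injective <|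
    eq_of_monic_of_associated (cyclotomic.monic n ℤ) (cyclotomic.monic m ℤ) <|
      (cyclotomic.irreducible hn).associated_of_dvd (cyclotomic.irreducible hm) hdvd

theorem Polynomial.pow_dvd_eval_one_of_cyclotomic_prime_pow_dvd {p k : ℕ} (hp : p.Prime)
    {T : ℤ[X]} (h : ∀ s < k, cyclotomic (p ^ (s + 1)) ℤ ∣ T) : (p : ℤ) ^ k ∣ T.eval 1 := by
  have hprod : ∏ s ∈ Finset.range k, cyclotomic (p ^ (s + 1)) ℤ ∣ T := by
    refine Finset.prod_dvd_of_isRelPrime (fun s _ t _ hst => ?_) fun s hs => h s ?_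
    · exact cyclotomic.isRelPrime_int fun hpow =>
        hst (by simpa using Nat.pow_right_injective hp.two_le hpow)
    · simpa using hs
  have : Fact p.Prime := ⟨hp⟩
  simpa [eval_prod, eval_one_cyclotomic_prime_pow] using eval_dvd (x := 1) hprod

theorem stmt12_general (p : ℕ) (hp : p.Prime) (A : Finset ℕ) (hcard : A.card = p)
    (T : Polynomial ℤ) (M : ℕ)
    (heval : (∑ a ∈ A, (X : Polynomial ℤ) ^ a).eval 1 * T.eval 1 = M)
    (hdvd : (∑ i ∈ Finset.range M, (X : Polynomial ℤ) ^ i) ∣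
      (∑ a ∈ A, (X : Polynomial ℤ) ^ a) * T)
    (k : ℕ) (hpk : p ^ k ∣ M) (hpk1 : ¬ p ^ (k + 1) ∣ M) :
    ∃ s : ℕ, s ≤ k - 1 ∧ cyclotomic (p ^ (s + 1)) ℤ ∣ ∑ a ∈ A, (X : Polynomial ℤ) ^ a := by
  by_contra! hnot
  have hT : ∀ s < k, cyclotomic (p ^ (s + 1)) ℤ ∣ T := by
    intro s hs
    have hgeom : cyclotomic (p ^ (s + 1)) ℤ ∣ ∑ i ∈ Finset.range M, (X : ℤ[X]) ^ i :=
      cyclotomic_dvd_geom_sum_of_dvd ℤ ((pow_dvd_pow p hs).trans hpk)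
        (Nat.one_lt_pow s.succ_ne_zero hp.one_lt).ne'
    exact ((cyclotomic.irreducible (pow_pos hp.pos _)).prime.dvd_mul.mp
      (hgeom.trans hdvd)).resolve_left (hnot s (by omega))
  have hf : (∑ a ∈ A, (X : ℤ[X]) ^ a).eval 1 = p := by simp [eval_finsetSum, hcard]
  apply hpk1
  have hpowM : (p : ℤ) ^ (k + 1) ∣ M := by
    rw [← heval, hf, pow_succ']
    exact mul_dvd_mul_left _ (pow_dvd_eval_one_of_cyclotomic_prime_pow_dvd hp hT)
  exact_mod_cast hpowM

theorem stmt12 (p : ℕ) (hp : p.Prime) (A : Finset ℕ) (hcard : A.card = p)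
    (T : Polynomial ℤ) (M : ℕ) (hM : 0 < M)
    (heval : (∑ a ∈ A, (X : Polynomial ℤ) ^ a).eval 1 * T.eval 1 = M)
    (hdvd : (∑ i ∈ Finset.range M, (X : Polynomial ℤ) ^ i) ∣
      (∑ a ∈ A, (X : Polynomial ℤ) ^ a) * T)
    (k : ℕ) (hk : 1 ≤ k) (hpk : p ^ k ∣ M) (hpk1 : ¬ p ^ (k + 1) ∣ M) :
    ∃ s : ℕ, s ≤ k - 1 ∧ cyclotomic (p ^ (s + 1)) ℤ ∣ ∑ a ∈ A, (X : Polynomial ℤ) ^ a :=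
  stmt12_general p hp A hcard T M heval hdvd k hpk hpk1
end
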